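/- arXiv:2205.11219 — 2 statements merged into one kernel-verified Lean document; each statement's English description precedes it below -/
import Mathlib

section
/- Let V be a finite-dimensional vector space over a field K and c ⊆ V a nonempty set of states such that there exists a functional u ∈ V* with u(ρ) = 1 for all ρ ∈ c. Then the double dual c** := {v ∈ V | ∀π ∈ V*, (∀ρ ∈ c, π ρ = 1) → π v = 1} equals the affine hull of c, i.e. the set of all finite linear combinations Σ λᵢ ρᵢ with ρᵢ ∈ c and Σ λᵢ = 1. -/
/-- for a nonempty set of states `c` in a finite-dimensional vector space
`V` admitting a normalising functional `u` (with `u ρ = 1` for all `ρ ∈ c`), the double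
dual `c** = {v | ∀ π ∈ V*, (∀ ρ ∈ c, π ρ = 1) → π v = 1}` equals the affine hull of `c`. -/
theorem double_dual_eq_affine_hull {K V : Type*} [Field K] [AddCommGroup V] [Module K V]
    [FiniteDimensional K V] (c : Set V) (hne : c.Nonempty)
    (hu : ∃ u : V →ₗ[K] K, ∀ ρ ∈ c, u ρ = 1) :
    {v : V | ∀ π : V →ₗ[K] K, (∀ ρ ∈ c, π ρ = 1) → π v = 1} =
      (affineSpan K c : Set V) := by
  obtain ⟨ρ₀, hρ₀⟩ := hne
  obtain ⟨u, hu⟩ := hu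
  have hρ₀span : ρ₀ ∈ affineSpan K c := subset_affineSpan K c hρ₀
  ext v
  simp only [Set.mem_setOf_eq, SetLike.mem_coe]
  constructor
  · intro hv
    by_contra hvs
    -- v - ρ₀ ∉ vectorSpan
    have hvd : v - ρ₀ ∉ vectorSpan K c := by
      intro h
      have h' : v - ρ₀ ∈ (affineSpan K c).direction := by rwa [direction_affineSpan]
      have := AffineSubspace.vadd_mem_of_mem_direction h' hρ₀span
      simp only [vadd_eq_add, sub_add_cancel] at this
      exact hvs this
    obtain ⟨f, hf0, hfbot⟩ :=
      (vectorSpan K c).exists_dual_map_eq_bot_of_notMem hvd inferInstance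
    have hfvanish : ∀ x ∈ vectorSpan K c, f x = 0 := by
      intro x hx
      have : f x ∈ Submodule.map f (vectorSpan K c) := ⟨x, hx, rfl⟩
      rwa [hfbot, Submodule.mem_bot] at this
    -- π := u + (f - f ρ₀ • u)
    set g : V →ₗ[K] K := f - (f ρ₀) • u with hg
    have hgc : ∀ ρ ∈ c, g ρ = 0 := by
      intro ρ hρ
      have h1 : f (ρ - ρ₀) = 0 :=
        hfvanish _ (vsub_mem_vectorSpan K hρ hρ₀)
      have h2 : f ρ = f ρ₀ := by
        have := map_sub f ρ ρ₀; rw [h1] at this; linear_combination -this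
      simp [hg, h2, hu ρ hρ]
    have huv : u v = 1 := hv u hu
    have hπ : ∀ ρ ∈ c, (u + g) ρ = 1 := by
      intro ρ hρ; simp [hu ρ hρ, hgc ρ hρ]
    have := hv (u + g) hπ
    have hgv : g v = 0 := by
      have : u v + g v = 1 := by simpa using this
      rw [huv] at this; linear_combination this
    have hfv : f v = f ρ₀ := by
      have : f v - f ρ₀ * u v = 0 := by simpa [hg] using hgv
      rw [huv] at this; linear_combination this
    have : f (v - ρ₀) = 0 := by rw [map_sub, hfv, sub_self]
    exact hf0 this
  · intro hv π hπ
    have hvd : v - ρ₀ ∈ vectorSpan K c := by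
      rw [← direction_affineSpan]
      simpa using AffineSubspace.vsub_mem_direction hv hρ₀span
    have hπd : π (v - ρ₀) = 0 := by
      refine Submodule.span_induction ?_ ?_ ?_ ?_ hvd
      · rintro x ⟨a, ha, b, hb, rfl⟩
        simp [vsub_eq_sub, hπ a ha, hπ b hb]
      · simp
      · intro x y _ _ hx hy; simp [hx, hy]
      · intro a x _ hx; simp [hx]
    have := map_sub π v ρ₀
    rw [hπd, hπ ρ₀ hρ₀] at this
    linear_combination -this
end

section
/- Let V, W be finite-dimensional vector spaces over a field K, c_A ⊆ V and c_B ⊆ W nonempty sets whose affine hulls contain bases of V and W respectively, and such that there are functionals u_A ∈ V*, u_B ∈ W* equal to 1 on c_A, c_B respectively. Let h ∈ V ⊗ W be non-signalling: there exist m ∈ affineHull(c_A) and n ∈ affineHull(c_B) with (id ⊗ π)(h) = m for every π ∈ W* with π ≡ 1 on c_B, and (σ ⊗ id)(h) = n for every σ ∈ V* with σ ≡ 1 on c_A. Then h lies in the affine hull of the product set { a ⊗ b | a ∈ affineHull(c_A), b ∈ affineHull(c_B) }. -/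
open TensorProduct

/-- Contraction of the second tensor factor by a functional:
`(id ⊗ π)(v ⊗ w) = π w • v`. -/
noncomputable def contractR (K V W : Type*) [Field K] [AddCommGroup V] [Module K V]
    [AddCommGroup W] [Module K W] (π : W →ₗ[K] K) : V ⊗[K] W →ₗ[K] V :=
  (TensorProduct.rid K V).toLinearMap ∘ₗ TensorProduct.map LinearMap.id π

/-- Contraction of the first tensor factor by a functional:
`(σ ⊗ id)(v ⊗ w) = σ v • w`. -/
noncomputable def contractL (K V W : Type*) [Field K] [AddCommGroup V] [Module K V]
    [AddCommGroup W] [Module K W] (σ : V →ₗ[K] K) : V ⊗[K] W →ₗ[K] W :=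
  (TensorProduct.lid K W).toLinearMap ∘ₗ TensorProduct.map σ LinearMap.id

/-! Let `P`, `Q` be the affine hulls of `c_A`, `c_B`. Since `u_A ≡ 1` on `P` and `P` contains a
basis, `d_A := id - u_A(·) m` maps `V` into the direction of `P`; likewise `d_B` for `Q`. The
tensor `t := h - m ⊗ n` is annihilated by both contractions `id ⊗ u_B` and `u_A ⊗ id`, so
`(d_A ⊗ d_B) t = t`, and `t` lies in the span of `dir P ⊗ dir Q`. That span is contained in the
direction of the affine hull of the products, because
`(p₁ - p₂) ⊗ (q₁ - q₂) = (p₁ ⊗ q₁ - p₂ ⊗ q₁) - (p₁ ⊗ q₂ - p₂ ⊗ q₂)`. -/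

section AffineSpan

variable {R V W : Type*}

theorem LinearMap.eq_one_of_mem_affineSpan [Ring R] [AddCommGroup V] [Module R V]
    {u : V →ₗ[R] R} {s : Set V} (hu : ∀ x ∈ s, u x = 1) {x : V} (hx : x ∈ affineSpan R s) :
    u x = 1 := by
  have hle : affineSpan R s ≤ (affineSpan R {(1 : R)}).comap u.toAffineMap :=
    affineSpan_le.2 fun y hy => by simp [hu y hy]
  simpa using hle hx

theorem range_id_sub_smulRight_le_direction [Ring R] [AddCommGroup V] [Module R V]
    {P : AffineSubspace R V} {u : V →ₗ[R] R} (hu : ∀ x ∈ P, u x = 1) {s : Set V}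
    (hsP : s ⊆ P) (hs : Submodule.span R s = ⊤) {p : V} (hp : p ∈ P) :
    LinearMap.range (LinearMap.id - u.smulRight p) ≤ P.direction := by
  have hle : Submodule.span R s ≤ P.direction.comap (LinearMap.id - u.smulRight p) :=
    Submodule.span_le.2 fun x hx => by
      simpa [hu x (hsP hx)] using AffineSubspace.vsub_mem_direction (hsP hx) hp
  rintro _ ⟨x, rfl⟩
  exact hle (hs ▸ Submodule.mem_top)

variable [CommRing R] [AddCommGroup V] [Module R V] [AddCommGroup W] [Module R W]

def productTensors (P : AffineSubspace R V) (Q : AffineSubspace R W) : Set (V ⊗[R] W) :=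
  {x | ∃ a ∈ (P : Set V), ∃ b ∈ (Q : Set W), x = a ⊗ₜ[R] b}

theorem map₂_mk_direction_le_vectorSpan_productTensors
    (P : AffineSubspace R V) (Q : AffineSubspace R W) :
    Submodule.map₂ (mk R V W) P.direction Q.direction ≤ vectorSpan R (productTensors P Q) := by
  rw [AffineSubspace.direction, AffineSubspace.direction, vectorSpan_def, vectorSpan_def,
    Submodule.map₂_span_span, Submodule.span_le]
  rintro _ ⟨_, ⟨p₁, hp₁, p₂, hp₂, rfl⟩, _, ⟨q₁, hq₁, q₂, hq₂, rfl⟩, rfl⟩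
  have hmem : ∀ p ∈ (P : Set V), ∀ q ∈ (Q : Set W), p ⊗ₜ[R] q ∈ productTensors P Q :=
    fun p hp q hq => ⟨p, hp, q, hq, rfl⟩
  have hexpand : (p₁ -ᵥ p₂) ⊗ₜ[R] (q₁ -ᵥ q₂) =
      (p₁ ⊗ₜ[R] q₁ -ᵥ p₂ ⊗ₜ[R] q₁) - (p₁ ⊗ₜ[R] q₂ -ᵥ p₂ ⊗ₜ[R] q₂) := by
    simp only [vsub_eq_sub, sub_tmul, tmul_sub]
  change (p₁ -ᵥ p₂) ⊗ₜ[R] (q₁ -ᵥ q₂) ∈ vectorSpan R _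
  rw [hexpand]
  exact Submodule.sub_mem _
    (vsub_mem_vectorSpan R (hmem _ hp₁ _ hq₁) (hmem _ hp₂ _ hq₁))
    (vsub_mem_vectorSpan R (hmem _ hp₁ _ hq₂) (hmem _ hp₂ _ hq₂))

theorem range_map_le_vectorSpan_productTensors {P : AffineSubspace R V} {Q : AffineSubspace R W}
    {f : V →ₗ[R] V} {g : W →ₗ[R] W} (hf : LinearMap.range f ≤ P.direction)
    (hg : LinearMap.range g ≤ Q.direction) :
    LinearMap.range (map f g) ≤ vectorSpan R (productTensors P Q) := by
  rw [range_map]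
  exact (Submodule.map₂_le_map₂ hf hg).trans (map₂_mk_direction_le_vectorSpan_productTensors P Q)

end AffineSpan

section Contraction

variable {K V W : Type*} [Field K] [AddCommGroup V] [Module K V] [AddCommGroup W] [Module K W]

@[simp]
theorem contractR_tmul (π : W →ₗ[K] K) (v : V) (w : W) :
    contractR K V W π (v ⊗ₜ w) = π w • v := by
  simp [contractR]

@[simp]
theorem contractL_tmul (σ : V →ₗ[K] K) (v : V) (w : W) :
    contractL K V W σ (v ⊗ₜ w) = σ v • w := by
  simp [contractL]

theorem lTensor_id_sub_smulRight_apply (π : W →ₗ[K] K) (b : W) (t : V ⊗[K] W) :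
    (LinearMap.id - π.smulRight b).lTensor V t = t - contractR K V W π t ⊗ₜ b := by
  induction t using TensorProduct.induction_on with
  | zero => simp
  | tmul v w => simp [smul_tmul]
  | add x y hx hy => rw [map_add, hx, hy, map_add, add_tmul]; abel

theorem rTensor_id_sub_smulRight_apply (σ : V →ₗ[K] K) (a : V) (t : V ⊗[K] W) :
    (LinearMap.id - σ.smulRight a).rTensor W t = t - a ⊗ₜ contractL K V W σ t := by
  induction t using TensorProduct.induction_on with
  | zero => simp
  | tmul v w => simp [smul_tmul]
  | add x y hx hy => rw [map_add, hx, hy, map_add, tmul_add]; abel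

theorem map_id_sub_smulRight_apply_of_contract_eq_zero {σ : V →ₗ[K] K} {π : W →ₗ[K] K}
    {t : V ⊗[K] W} (hσ : contractL K V W σ t = 0) (hπ : contractR K V W π t = 0)
    (a : V) (b : W) :
    map (LinearMap.id - σ.smulRight a) (LinearMap.id - π.smulRight b) t = t := by
  rw [← LinearMap.rTensor_comp_lTensor, LinearMap.comp_apply, lTensor_id_sub_smulRight_apply,
    hπ, zero_tmul, sub_zero, rTensor_id_sub_smulRight_apply, hσ, tmul_zero, sub_zero]

end Contraction

theorem nonsignalling_mem_affine_hull_of_products_general {K V W : Type*} [Field K]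
    [AddCommGroup V] [Module K V]
    [AddCommGroup W] [Module K W]
    (cA : Set V) (cB : Set W)
    (hAbasis : ∃ b : Module.Basis (Fin (Module.finrank K V)) K V,
      ∀ i, b i ∈ (affineSpan K cA : Set V))
    (hBbasis : ∃ b : Module.Basis (Fin (Module.finrank K W)) K W,
      ∀ i, b i ∈ (affineSpan K cB : Set W))
    (uA : V →ₗ[K] K) (huA : ∀ a ∈ cA, uA a = 1)
    (uB : W →ₗ[K] K) (huB : ∀ b ∈ cB, uB b = 1)
    (h : V ⊗[K] W) (m : V) (n : W)
    (hmmem : m ∈ (affineSpan K cA : Set V)) (hnmem : n ∈ (affineSpan K cB : Set W))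
    (hleft : ∀ π : W →ₗ[K] K, (∀ g ∈ cB, π g = 1) → contractR K V W π h = m)
    (hright : ∀ σ : V →ₗ[K] K, (∀ a ∈ cA, σ a = 1) → contractL K V W σ h = n) :
    h ∈ affineSpan K {x : V ⊗[K] W |
      ∃ a ∈ (affineSpan K cA : Set V), ∃ b ∈ (affineSpan K cB : Set W),
        x = a ⊗ₜ[K] b} := by
  obtain ⟨bA, hbA⟩ := hAbasis
  obtain ⟨bB, hbB⟩ := hBbasis
  have huA' : ∀ x ∈ affineSpan K cA, uA x = 1 := fun _ => uA.eq_one_of_mem_affineSpan huA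
  have huB' : ∀ x ∈ affineSpan K cB, uB x = 1 := fun _ => uB.eq_one_of_mem_affineSpan huB
  have hdA := range_id_sub_smulRight_le_direction huA' (Set.range_subset_iff.2 hbA)
    bA.span_eq hmmem
  have hdB := range_id_sub_smulRight_le_direction huB' (Set.range_subset_iff.2 hbB)
    bB.span_eq hnmem
  have hmn : m ⊗ₜ[K] n ∈ productTensors (affineSpan K cA) (affineSpan K cB) :=
    ⟨m, hmmem, n, hnmem, rfl⟩
  have hσ : contractL K V W uA (h - m ⊗ₜ n) = 0 := by simp [hright uA huA, huA' m hmmem]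
  have hπ : contractR K V W uB (h - m ⊗ₜ n) = 0 := by simp [hleft uB huB, huB' n hnmem]
  change h ∈ affineSpan K (productTensors (affineSpan K cA) (affineSpan K cB))
  rw [← AffineSubspace.vsub_right_mem_direction_iff_mem (subset_affineSpan K _ hmn),
    direction_affineSpan, vsub_eq_sub,
    ← map_id_sub_smulRight_apply_of_contract_eq_zero hσ hπ m n]
  exact range_map_le_vectorSpan_productTensors hdA hdB (LinearMap.mem_range_self _ _)

/-- nonsignalling implies affine combination of products.  If `c_A`,
`c_B` are nonempty sets whose affine hulls contain bases, normalised by functionals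
`u_A`, `u_B`, and `h ∈ V ⊗ W` has constant left residual `m ∈ aff(c_A)` and constant
right residual `n ∈ aff(c_B)` under all normalised effects, then `h` lies in the
affine hull of the set of product states of affine combinations. -/
theorem nonsignalling_mem_affine_hull_of_products {K V W : Type*} [Field K]
    [AddCommGroup V] [Module K V] [FiniteDimensional K V]
    [AddCommGroup W] [Module K W] [FiniteDimensional K W]
    (cA : Set V) (cB : Set W) (hAne : cA.Nonempty) (hBne : cB.Nonempty)
    (hAbasis : ∃ b : Module.Basis (Fin (Module.finrank K V)) K V,
      ∀ i, b i ∈ (affineSpan K cA : Set V))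
    (hBbasis : ∃ b : Module.Basis (Fin (Module.finrank K W)) K W,
      ∀ i, b i ∈ (affineSpan K cB : Set W))
    (uA : V →ₗ[K] K) (huA : ∀ a ∈ cA, uA a = 1)
    (uB : W →ₗ[K] K) (huB : ∀ b ∈ cB, uB b = 1)
    (h : V ⊗[K] W) (m : V) (n : W)
    (hmmem : m ∈ (affineSpan K cA : Set V)) (hnmem : n ∈ (affineSpan K cB : Set W))
    (hleft : ∀ π : W →ₗ[K] K, (∀ g ∈ cB, π g = 1) → contractR K V W π h = m)
    (hright : ∀ σ : V →ₗ[K] K, (∀ a ∈ cA, σ a = 1) → contractL K V W σ h = n) :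
    h ∈ affineSpan K {x : V ⊗[K] W |
      ∃ a ∈ (affineSpan K cA : Set V), ∃ b ∈ (affineSpan K cB : Set W),
        x = a ⊗ₜ[K] b} :=
  nonsignalling_mem_affine_hull_of_products_general cA cB hAbasis hBbasis uA huA uB huB h m n hmmem
    hnmem hleft hright
end
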